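/- Let A and B be ideals of a vector lattice X, and let τ and σ be locally solid topologies on X. If u_Bσ ⊆ u_Aτ as topologies on X (i.e. u_Bσ is coarser than u_Aτ), then the σ-closure of A ∩ B equals the σ-closure of B. -/

import Mathlib

open Filter Set Topology

variable {X : Type*} [Lattice X] [AddCommGroup X] [Module ℝ X]
  [CovariantClass X X (· + ·) (· ≤ ·)] [PosSMulMono ℝ X]

/-- The Archimedean property for a lattice-ordered group. -/
def VLArchimedean (X : Type*) [Lattice X] [AddCommGroup X] : Prop :=
  ∀ x y : X, 0 ≤ x → (∀ n : ℕ, n • x ≤ y) → x = 0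

/-- A set is solid if `x ∈ S` and `|y| ≤ |x|` imply `y ∈ S`. -/
def IsSolid (S : Set X) : Prop := ∀ ⦃x y : X⦄, x ∈ S → |y| ≤ |x| → y ∈ S

/-- A locally solid (linear) topology on a vector lattice. -/
def IsLocallySolidTop (τ : TopologicalSpace X) : Prop :=
  @IsTopologicalAddGroup X τ _ ∧ @ContinuousSMul ℝ X _ _ τ ∧
    ∀ U ∈ @nhds X τ 0, ∃ V ∈ @nhds X τ 0, IsSolid V ∧ V ⊆ U

/-- An order ideal: a solid linear subspace. -/
def IsOrderIdeal (A : Set X) : Prop :=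
  0 ∈ A ∧ (∀ x ∈ A, ∀ y ∈ A, x + y ∈ A) ∧ (∀ (c : ℝ), ∀ x ∈ A, c • x ∈ A) ∧ IsSolid A

/-- The order ideal generated by a set. -/
def idealGenerated (A : Set X) : Set X := ⋂₀ {I | IsOrderIdeal I ∧ A ⊆ I}

/-- A band: an order ideal closed under existing suprema. -/
def IsBand (B : Set X) : Prop :=
  IsOrderIdeal B ∧ ∀ D ⊆ B, ∀ x : X, IsLUB D x → x ∈ B

/-- The band generated by a set. -/
def bandGenerated (A : Set X) : Set X := ⋂₀ {B | IsBand B ∧ A ⊆ B}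

/-- `A` is a countable order basis: `A` is at most countable and generates `X` as a band. -/
def CountableOrderBasis (A : Set X) : Prop := A.Countable ∧ bandGenerated A = Set.univ

/-- The neighbourhood filter of zero of the unbounded topology `u_A τ`:
generated by the sets `{x : |x| ⊓ a ∈ U}` for `U` a `τ`-neighbourhood of zero, `a ∈ A₊`. -/
def unbNhdsZero (τ : TopologicalSpace X) (A : Set X) : Filter X :=
  ⨅ a ∈ {a ∈ A | 0 ≤ a}, Filter.comap (fun x => |x| ⊓ a) (@nhds X τ 0)

/-- The unbounded topology `u_A τ` induced by the ideal `A`; `u τ = unbTopology τ Set.univ`. -/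
def unbTopology (τ : TopologicalSpace X) (A : Set X) : TopologicalSpace X :=
  TopologicalSpace.mkOfNhds fun x => Filter.map (x + ·) (unbNhdsZero τ A)

/-- A sublattice/ideal is order dense if every nonzero positive vector dominates a
nonzero positive vector of it. -/
def OrderDense (A : Set X) : Prop := ∀ x : X, 0 < x → ∃ y ∈ A, 0 < y ∧ y ≤ x

/-- A minimal topology: a Hausdorff locally solid topology with no strictly coarser
Hausdorff locally solid topology. (In Mathlib's order on `TopologicalSpace`,
`τ ≤ σ` means `τ` is finer than `σ`.) -/
def IsMinimalTop (τ : TopologicalSpace X) : Prop :=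
  IsLocallySolidTop τ ∧ @T2Space X τ ∧
    ∀ σ : TopologicalSpace X, IsLocallySolidTop σ → @T2Space X σ → τ ≤ σ → σ = τ

/-- The countable sup property. -/
def CountableSupProperty (Y : Type*) [Lattice Y] : Prop :=
  ∀ S : Set Y, ∀ x : Y, S.Nonempty → IsLUB S x → ∃ C ⊆ S, C.Countable ∧ IsLUB C x

/-- Order convergence to zero of a net: there is a downward directed set `D` with
infimum `0`, each member of which eventually dominates `|x α|`. -/
def OrderNull {ι : Type*} [Preorder ι] (x : ι → X) : Prop :=
  ∃ D : Set X, D.Nonempty ∧ (∀ a ∈ D, ∀ b ∈ D, ∃ c ∈ D, c ≤ a ∧ c ≤ b) ∧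
    IsGLB D 0 ∧ ∀ d ∈ D, ∃ α₀ : ι, ∀ α, α₀ ≤ α → |x α| ≤ d

/-- Unbounded order (uo-) convergence to zero of a net. -/
def UoNull {ι : Type*} [Preorder ι] (x : ι → X) : Prop :=
  ∀ u : X, 0 ≤ u → OrderNull (fun α => |x α| ⊓ u)

/-- A set is topologically bounded if it is absorbed by every neighbourhood of zero. -/
def TopBounded (τ : TopologicalSpace X) (S : Set X) : Prop :=
  ∀ U ∈ @nhds X τ 0, ∃ l : ℝ, 0 < l ∧ ∀ x ∈ S, l • x ∈ U

/-- A locally bounded topology: it has a topologically bounded neighbourhood of zero. -/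
def LocallyBoundedTop (τ : TopologicalSpace X) : Prop :=
  ∃ V ∈ @nhds X τ 0, TopBounded τ V

/-- A submetrizable topology: finer than some metrizable linear topology.
(In Mathlib's order on `TopologicalSpace`, `τ ≤ σ` means `τ` is finer than `σ`.) -/
def Submetrizable (τ : TopologicalSpace X) : Prop :=
  ∃ σ : TopologicalSpace X, @IsTopologicalAddGroup X σ _ ∧ @ContinuousSMul ℝ X _ _ σ ∧
    @TopologicalSpace.MetrizableSpace X σ ∧ τ ≤ σ

/-- A Riesz submetrizable topology: finer than some metrizable locally solid topology. -/
def RieszSubmetrizable (τ : TopologicalSpace X) : Prop :=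
  ∃ σ : TopologicalSpace X, IsLocallySolidTop σ ∧ @TopologicalSpace.MetrizableSpace X σ ∧ τ ≤ σ

/-- Dedekind (order) completeness. -/
def DedekindComplete (Y : Type*) [Lattice Y] : Prop :=
  ∀ S : Set Y, S.Nonempty → BddAbove S → ∃ x, IsLUB S x

/-- Lateral completeness: every nonempty set of pairwise disjoint positive vectors
has a supremum. -/
def LaterallyComplete (Y : Type*) [Lattice Y] [AddCommGroup Y] : Prop :=
  ∀ S : Set Y, S.Nonempty → (∀ x ∈ S, 0 ≤ x) → (S.Pairwise fun a b => a ⊓ b = 0) →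
    ∃ x, IsLUB S x

/-!
Write `b ∈ B` as `b⁺ - b⁻`; it then suffices to approximate a positive `x ∈ B` in `σ` by the
truncations `x ⊓ n • a ∈ A ∩ B` with `a ∈ A₊`. For a solid `σ`-neighbourhood `U` of zero, the set
`{z | |z| ⊓ x ∈ U}` is a `u_B σ`-neighbourhood of zero, hence a `u_A τ`-neighbourhood, so it
contains some `{z | |z| ⊓ a ∈ V}`. The remainder `z = x - x ⊓ n • a` satisfies `z ⊓ a ≤ x / n`,
which lies in `V` for large `n`, and since `z ≤ x` this gives `z = |z| ⊓ x ∈ U`.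
-/

section LatticeOrderedGroup

variable {E : Type*} [Lattice E] [AddCommGroup E] [AddLeftMono E]

theorem add_inf_le_inf_add_inf {u v a : E} (hu : 0 ≤ u) (hv : 0 ≤ v) (ha : 0 ≤ a) :
    (u + v) ⊓ a ≤ u ⊓ a + v ⊓ a := by
  rw [add_inf, inf_add, inf_add]
  refine le_inf (le_inf inf_le_left ?_) (le_inf ?_ ?_) <;> refine inf_le_right.trans ?_
  · exact le_add_of_nonneg_right hv
  · exact le_add_of_nonneg_left hu
  · exact le_add_of_nonneg_left ha

theorem abs_add_inf_le (x y : E) {a : E} (ha : 0 ≤ a) :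
    |x + y| ⊓ a ≤ |x| ⊓ a + |y| ⊓ a :=
  (inf_le_inf_right a (abs_add_le x y)).trans
    (add_inf_le_inf_add_inf (abs_nonneg x) (abs_nonneg y) ha)

theorem nsmul_sub_inf_nsmul_inf_le {x u : E} (hx : 0 ≤ x) (hu : 0 ≤ u) (n : ℕ) :
    n • ((x - x ⊓ n • u) ⊓ u) ≤ x := by
  set w := (x - x ⊓ n • u) ⊓ u
  have hw : ∀ k ≤ n, w ≤ x - x ⊓ k • u := fun k hk =>
    inf_le_left.trans (sub_le_sub_left (inf_le_inf_left x (nsmul_le_nsmul_left hu hk)) x)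
  have hkw : ∀ k ≤ n, k • w ≤ x ⊓ k • u := by
    intro k hk
    induction k with
    | zero => simpa using hx
    | succ k ih =>
      have ih := ih (by omega)
      rw [succ_nsmul, succ_nsmul]
      refine le_inf ?_ (add_le_add (ih.trans inf_le_right) inf_le_right)
      calc k • w + w ≤ x ⊓ k • u + (x - x ⊓ k • u) := add_le_add ih (hw k (by omega))
        _ = x := add_sub_cancel _ _
  exact (hkw n le_rfl).trans inf_le_left

end LatticeOrderedGroup

theorem sub_inf_nsmul_inf_le_inv_smul {E : Type*} [Lattice E] [AddCommGroup E] [AddLeftMono E]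
    [Module ℝ E] [PosSMulMono ℝ E] {x u : E} (hx : 0 ≤ x) (hu : 0 ≤ u) {n : ℕ} (hn : n ≠ 0) :
    (x - x ⊓ n • u) ⊓ u ≤ (n : ℝ)⁻¹ • x := by
  have hn' : (n : ℝ) ≠ 0 := Nat.cast_ne_zero.2 hn
  have key := nsmul_sub_inf_nsmul_inf_le hx hu n
  rw [← Nat.cast_smul_eq_nsmul ℝ] at key
  simpa [smul_smul, inv_mul_cancel₀ hn'] using
    smul_le_smul_of_nonneg_left key (by positivity : (0 : ℝ) ≤ (n : ℝ)⁻¹)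

section Solid

variable {E : Type*} [Lattice E] [AddCommGroup E] [AddLeftMono E] {S : Set E}

theorem IsSolid.mem_of_nonneg_of_le (hS : IsSolid S) {x y : E} (hx : x ∈ S)
    (hy : 0 ≤ y) (hyx : y ≤ x) : y ∈ S :=
  hS hx <| by rw [abs_of_nonneg hy, abs_of_nonneg (hy.trans hyx)]; exact hyx

theorem IsSolid.posPart_mem (hS : IsSolid S) {x : E} (hx : x ∈ S) : x⁺ ∈ S :=
  hS hx <| by rw [abs_of_nonneg (posPart_nonneg x)]; exact sup_le (le_abs_self x) (abs_nonneg x)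

theorem IsSolid.negPart_mem (hS : IsSolid S) {x : E} (hx : x ∈ S) : x⁻ ∈ S :=
  hS hx <| by rw [abs_of_nonneg (negPart_nonneg x)]; exact sup_le (neg_le_abs x) (abs_nonneg x)

theorem IsSolid.setOf_abs_inf_mem_anti (hS : IsSolid S) {a a' : E} (ha : 0 ≤ a)
    (haa' : a ≤ a') : {x | |x| ⊓ a' ∈ S} ⊆ {x | |x| ⊓ a ∈ S} := fun x hx =>
  hS.mem_of_nonneg_of_le hx (le_inf (abs_nonneg x) ha) (inf_le_inf_left _ haa')

end Solid

namespace IsOrderIdeal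

variable {E : Type*} [Lattice E] [AddCommGroup E] [Module ℝ E] {A B : Set E}

theorem isSolid (hA : IsOrderIdeal A) : IsSolid A := hA.2.2.2

theorem sub_mem (hA : IsOrderIdeal A) {x y : E} (hx : x ∈ A) (hy : y ∈ A) : x - y ∈ A := by
  rw [sub_eq_add_neg, ← neg_one_smul ℝ y]
  exact hA.2.1 x hx _ (hA.2.2.1 (-1) y hy)

theorem nsmul_mem (hA : IsOrderIdeal A) (n : ℕ) {x : E} (hx : x ∈ A) : n • x ∈ A := by
  rw [← Nat.cast_smul_eq_nsmul ℝ]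
  exact hA.2.2.1 _ x hx

theorem sup_mem_of_nonneg [AddLeftMono E] (hA : IsOrderIdeal A) {x y : E} (hx : x ∈ A)
    (hy : y ∈ A) (hx0 : 0 ≤ x) (hy0 : 0 ≤ y) : x ⊔ y ∈ A :=
  hA.isSolid.mem_of_nonneg_of_le (hA.2.1 x hx y hy) (hx0.trans le_sup_left)
    (sup_le (le_add_of_nonneg_right hy0) (le_add_of_nonneg_left hx0))

theorem inter (hA : IsOrderIdeal A) (hB : IsOrderIdeal B) : IsOrderIdeal (A ∩ B) :=
  ⟨⟨hA.1, hB.1⟩, fun x hx y hy => ⟨hA.2.1 x hx.1 y hy.1, hB.2.1 x hx.2 y hy.2⟩,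
    fun c x hx => ⟨hA.2.2.1 c x hx.1, hB.2.2.1 c x hx.2⟩,
    fun _ _ hx hyx => ⟨hA.isSolid hx.1 hyx, hB.isSolid hx.2 hyx⟩⟩

end IsOrderIdeal

theorem tendsto_inv_natCast_smul_nhds_zero {F : Type*} [TopologicalSpace F] [AddCommGroup F]
    [Module ℝ F] [ContinuousSMul ℝ F] (x : F) :
    Tendsto (fun n : ℕ => (n : ℝ)⁻¹ • x) atTop (𝓝 0) := by
  have h : Tendsto (fun n : ℕ => (n : ℝ)⁻¹) atTop (𝓝 0) :=
    tendsto_inv_atTop_zero.comp tendsto_natCast_atTop_atTop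
  simpa using h.smul_const x

section Topology

variable {E : Type*} [Lattice E] [AddCommGroup E] [Module ℝ E] {τ : TopologicalSpace E}

theorem IsLocallySolidTop.hasBasis_solid (hτ : IsLocallySolidTop τ) :
    (@nhds E τ 0).HasBasis (fun V => V ∈ @nhds E τ 0 ∧ IsSolid V) id :=
  hasBasis_self.2 hτ.2.2

theorem IsLocallySolidTop.mem_closure_of_forall_sub_mem (hτ : IsLocallySolidTop τ) {S : Set E}
    {x : E} (h : ∀ U ∈ @nhds E τ 0, IsSolid U → ∃ y ∈ S, x - y ∈ U) : x ∈ @closure E τ S := by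
  let _ := τ
  have := hτ.1
  rw [mem_closure_iff_nhds_basis (map_add_left_nhds_zero x ▸ hτ.hasBasis_solid.map (x + ·))]
  rintro U ⟨hU, hUs⟩
  obtain ⟨y, hyS, hyU⟩ := h U hU hUs
  exact ⟨y, hyS, y - x, hUs hyU (abs_sub_comm y x).le, add_sub_cancel x y⟩

variable [AddLeftMono E] {A : Set E}

theorem hasBasis_unbNhdsZero (hτ : IsLocallySolidTop τ) (hA : IsOrderIdeal A) :
    (unbNhdsZero τ A).HasBasis
      (fun p : E × Set E => (p.1 ∈ A ∧ 0 ≤ p.1) ∧ p.2 ∈ @nhds E τ 0 ∧ IsSolid p.2)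
      (fun p => {x | |x| ⊓ p.1 ∈ p.2}) := by
  refine hasBasis_biInf_of_directed (dom := {a ∈ A | 0 ≤ a}) ⟨0, hA.1, le_rfl⟩ _ _
    (fun a _ => hτ.hasBasis_solid.comap _) ?_
  have anti : ∀ {a a' : E}, 0 ≤ a → a ≤ a' → Filter.comap (fun x => |x| ⊓ a') (@nhds E τ 0) ≤
      Filter.comap (fun x => |x| ⊓ a) (@nhds E τ 0) := fun ha haa' =>
    (hτ.hasBasis_solid.comap _).ge_iff.2 fun V hV =>
      mem_of_superset (preimage_mem_comap hV.1) (hV.2.setOf_abs_inf_mem_anti ha haa')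
  rintro a ⟨haA, ha⟩ b ⟨hbA, hb⟩
  exact ⟨a ⊔ b, ⟨hA.sup_mem_of_nonneg haA hbA ha hb, ha.trans le_sup_left⟩,
    anti ha le_sup_left, anti hb le_sup_right⟩

theorem zero_mem_of_mem_unbNhdsZero (hτ : IsLocallySolidTop τ) (hA : IsOrderIdeal A)
    {s : Set E} (hs : s ∈ unbNhdsZero τ A) : (0 : E) ∈ s := by
  obtain ⟨⟨a, V⟩, ⟨⟨-, ha⟩, hV, -⟩, hsub⟩ := (hasBasis_unbNhdsZero hτ hA).mem_iff.1 hs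
  refine hsub ?_
  simpa [abs_zero, inf_eq_left.2 ha] using mem_of_mem_nhds hV

theorem exists_add_mem_of_mem_unbNhdsZero (hτ : IsLocallySolidTop τ) (hA : IsOrderIdeal A)
    {s : Set E} (hs : s ∈ unbNhdsZero τ A) :
    ∃ t ∈ unbNhdsZero τ A, ∀ p ∈ t, ∀ q ∈ t, p + q ∈ s := by
  let _ := τ
  have := hτ.1
  obtain ⟨⟨a, V⟩, ⟨haA, hV, hVs⟩, hsub⟩ := (hasBasis_unbNhdsZero hτ hA).mem_iff.1 hs
  obtain ⟨V₁, hV₁, hV₁V⟩ := exists_nhds_zero_half hV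
  obtain ⟨V₂, ⟨hV₂, hV₂s⟩, hV₂V₁⟩ := hτ.hasBasis_solid.mem_iff.1 hV₁
  refine ⟨_, (hasBasis_unbNhdsZero hτ hA).mem_of_mem (i := (a, V₂)) ⟨haA, hV₂, hV₂s⟩,
    fun p hp q hq => hsub ?_⟩
  exact hVs.mem_of_nonneg_of_le (hV₁V _ (hV₂V₁ hp) _ (hV₂V₁ hq))
    (le_inf (abs_nonneg _) haA.2) (abs_add_inf_le p q haA.2)

theorem nhds_unbTopology (hτ : IsLocallySolidTop τ) (hA : IsOrderIdeal A) (x : E) :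
    @nhds E (unbTopology τ A) x = map (x + ·) (unbNhdsZero τ A) := by
  refine TopologicalSpace.nhds_mkOfNhds _ _ (fun y => pure_le_iff.2 fun s hs => ?_) ?_
  · simpa using zero_mem_of_mem_unbNhdsZero hτ hA (mem_map.1 hs)
  · intro y s hs
    obtain ⟨t, ht, hts⟩ := exists_add_mem_of_mem_unbNhdsZero hτ hA (mem_map.1 hs)
    rw [eventually_map]
    filter_upwards [ht] with p hp
    exact mem_map.2 (mem_of_superset ht fun q hq => by simpa [add_assoc] using hts p hp q hq)

theorem unbNhdsZero_le_of_unbTopology_le {σ : TopologicalSpace E} {B : Set E}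
    (hτ : IsLocallySolidTop τ) (hσ : IsLocallySolidTop σ) (hA : IsOrderIdeal A)
    (hB : IsOrderIdeal B) (h : unbTopology τ A ≤ unbTopology σ B) :
    unbNhdsZero τ A ≤ unbNhdsZero σ B := by
  simpa [nhds_unbTopology hτ hA, nhds_unbTopology hσ hB] using nhds_mono (a := 0) h

end Topology

theorem mem_closure_inter_of_unbTopology_le {τ σ : TopologicalSpace X}
    (hτ : IsLocallySolidTop τ) (hσ : IsLocallySolidTop σ) {A B : Set X} (hA : IsOrderIdeal A)
    (hB : IsOrderIdeal B) (h : unbTopology τ A ≤ unbTopology σ B) {x : X} (hxB : x ∈ B)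
    (hx : 0 ≤ x) : x ∈ @closure X σ (A ∩ B) := by
  let _ := τ
  have := hτ.2.1
  refine hσ.mem_closure_of_forall_sub_mem fun U hU hUs => ?_
  have hW : {z | |z| ⊓ x ∈ U} ∈ unbNhdsZero τ A :=
    unbNhdsZero_le_of_unbTopology_le hτ hσ hA hB h <|
      (hasBasis_unbNhdsZero hσ hB).mem_of_mem (i := (x, U)) ⟨⟨hxB, hx⟩, hU, hUs⟩
  obtain ⟨⟨a, V⟩, ⟨⟨haA, ha⟩, hV, hVs⟩, hsub⟩ := (hasBasis_unbNhdsZero hτ hA).mem_iff.1 hW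
  obtain ⟨n, hn, hnV⟩ :=
    ((eventually_ne_atTop 0).and ((tendsto_inv_natCast_smul_nhds_zero x).eventually_mem hV)).exists
  have hna : 0 ≤ n • a := nsmul_nonneg ha n
  set z := x - x ⊓ n • a
  have hz : 0 ≤ z := sub_nonneg.2 inf_le_left
  have hzx : z ≤ x := sub_le_self x (le_inf hx hna)
  have hzV : |z| ⊓ a ∈ V := by
    rw [abs_of_nonneg hz]
    exact hVs.mem_of_nonneg_of_le hnV (le_inf hz ha) (sub_inf_nsmul_inf_le_inv_smul hx ha hn)
  have hzU : |z| ⊓ x ∈ U := hsub hzV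
  rw [abs_of_nonneg hz, inf_eq_left.2 hzx] at hzU
  refine ⟨x ⊓ n • a, ⟨?_, ?_⟩, hzU⟩
  · exact hA.isSolid.mem_of_nonneg_of_le (hA.nsmul_mem n haA) (le_inf hx hna) inf_le_right
  · exact hB.isSolid.mem_of_nonneg_of_le hxB (le_inf hx hna) inf_le_left

theorem stmt2_general (τ σ : TopologicalSpace X)
    (hτ : IsLocallySolidTop τ) (hσ : IsLocallySolidTop σ)
    (A B : Set X) (hA : IsOrderIdeal A) (hB : IsOrderIdeal B)
    (h : unbTopology τ A ≤ unbTopology σ B) :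
    @closure X σ (A ∩ B) = @closure X σ B := by
  let _ := σ
  have := hσ.1
  refine (closure_mono inter_subset_right).antisymm
    (closure_minimal (fun b hb => ?_) isClosed_closure)
  have hpos : ∀ {x}, x ∈ B → 0 ≤ x → x ∈ closure (A ∩ B) :=
    mem_closure_inter_of_unbTopology_le hτ hσ hA hB h
  rw [← posPart_sub_negPart b]
  exact map_mem_closure₂ continuous_sub (hpos (hB.isSolid.posPart_mem hb) (posPart_nonneg b))
    (hpos (hB.isSolid.negPart_mem hb) (negPart_nonneg b))
    fun x hx y hy => (hA.inter hB).sub_mem hx hy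

/-- if `u_B σ ⊆ u_A τ` (i.e. `u_A τ` is finer), then the `σ`-closures of
`A ∩ B` and of `B` coincide. -/
theorem stmt2 (hArch : VLArchimedean X) (τ σ : TopologicalSpace X)
    (hτ : IsLocallySolidTop τ) (hσ : IsLocallySolidTop σ)
    (A B : Set X) (hA : IsOrderIdeal A) (hB : IsOrderIdeal B)
    (h : unbTopology τ A ≤ unbTopology σ B) :
    @closure X σ (A ∩ B) = @closure X σ B :=
  stmt2_general τ σ hτ hσ A B hA hB h
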